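/- Let M be a monoid of hypersubstitutions of L, let Σ be a set of identities of L, and let V be the variety defined by Σ. Then every identity belonging to Σ is M-hyper-satisfied in every structure of V if and only if V is M-solid. -/

import Mathlib

open FirstOrder Language

universe u v w

/-- A hypersubstitution of `L` assigns to each `n`-ary function symbol of `L`
an `L`-term with variables in `Fin n`. -/
def Hypersub (L : FirstOrder.Language.{u, v}) : Type _ :=
  ∀ n : ℕ, L.Functions n → L.Term (Fin n)

variable {L : FirstOrder.Language.{u, v}}

/-- The extension `σ̂` of a hypersubstitution `σ` to all terms. -/
def Hypersub.apply (σ : Hypersub L) {α : Type w} : L.Term α → L.Term α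
  | Term.var x => Term.var x
  | Term.func f ts => Term.subst (σ _ f) (fun i => Hypersub.apply σ (ts i))

/-- The derived structure `A^σ`: same universe, each function symbol `f` is
interpreted by the term function of `σ f` in `A`. -/
def Hypersub.derive (σ : Hypersub L) {A : Type w} (S : L.Structure A) : L.Structure A :=
  letI := S
  { funMap := fun {n} f v => (σ n f).realize v
    RelMap := fun r v => Structure.RelMap r v }

/-- Realization of a term in an explicitly given structure. -/
def realizeIn {A : Type w} (S : L.Structure A) {α : Type*} (a : α → A) (t : L.Term α) : A :=
  letI := S
  t.realize a

/-- An identity `p = q` of `L` in `k` variables. -/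
structure Identity (L : FirstOrder.Language.{u, v}) : Type max u (v + 1) where
  k : ℕ
  lhs : L.Term (Fin k)
  rhs : L.Term (Fin k)

/-- Satisfaction of an identity in a structure. -/
def Identity.Satisfied (e : Identity L) {A : Type w} (S : L.Structure A) : Prop :=
  ∀ a : Fin e.k → A, realizeIn S a e.lhs = realizeIn S a e.rhs

/-- The identity `σ̂ p = σ̂ q`. -/
def Identity.hmap (σ : Hypersub L) (e : Identity L) : Identity L :=
  ⟨e.k, σ.apply e.lhs, σ.apply e.rhs⟩

/-- An identity is `M`-hyper-satisfied if `σ̂ p = σ̂ q` is satisfied for every `σ ∈ M`. -/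
def Identity.MHyperSatisfied (M : Set (Hypersub L)) (e : Identity L)
    {A : Type w} (S : L.Structure A) : Prop :=
  ∀ σ ∈ M, (e.hmap σ).Satisfied S

/-- The identity hypersubstitution `σ_id`, with `σ_id f = f(x₀, …, x_{n-1})`. -/
def Hypersub.id (L : FirstOrder.Language.{u, v}) : Hypersub L :=
  fun _n f => Term.func f (fun i => Term.var i)

/-- Composition of hypersubstitutions: `(σ ∘ ρ) f = σ̂ (ρ f)`. -/
def Hypersub.comp (σ ρ : Hypersub L) : Hypersub L :=
  fun n f => σ.apply (ρ n f)

/-- `M` is a monoid of hypersubstitutions: it contains the identity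
hypersubstitution and is closed under composition. -/
def IsHypersubMonoid (M : Set (Hypersub L)) : Prop :=
  Hypersub.id L ∈ M ∧ ∀ σ ∈ M, ∀ ρ ∈ M, σ.comp ρ ∈ M

theorem realizeIn_derive (σ : Hypersub L) {A : Type w} (S : L.Structure A) {α : Type*}
    (a : α → A) (t : L.Term α) :
    realizeIn (σ.derive S) a t = realizeIn S a (σ.apply t) := by
  induction t with
  | var x => rfl
  | func f ts ih =>
      show (σ _ f).realize (fun i => realizeIn (σ.derive S) a (ts i)) = _
      simp only [ih]
      exact Term.realize_subst.symm

theorem Identity.satisfied_derive_iff (σ : Hypersub L) (e : Identity L) {A : Type w}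
    (S : L.Structure A) : e.Satisfied (σ.derive S) ↔ (e.hmap σ).Satisfied S := by
  simp only [Identity.Satisfied, Identity.hmap, realizeIn_derive]

theorem identity_M_hyperbasis_iff_M_solid_general {L : FirstOrder.Language.{u, v}}
    (M : Set (Hypersub L)) (Γ : Set (Identity L)) :
    (∀ e ∈ Γ, ∀ (A : Type w) (S : L.Structure A),
        (∀ e' ∈ Γ, e'.Satisfied S) → e.MHyperSatisfied M S) ↔
    (∀ (A : Type w) (S : L.Structure A), (∀ e' ∈ Γ, e'.Satisfied S) →
        ∀ σ ∈ M, ∀ e' ∈ Γ, e'.Satisfied (Hypersub.derive σ S)) := by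
  simp only [Identity.MHyperSatisfied, Identity.satisfied_derive_iff]
  exact ⟨fun h A S hS σ hσ e he => h e he A S hS σ hσ,
    fun h e he A S hS σ hσ => h A S hS σ hσ e he⟩

/-- Let `M` be a monoid of hypersubstitutions and `V` the variety
defined by `Γ`. Then every identity belonging to `Γ` is `M`-hyper-satisfied in every
structure of `V` if and only if `V` is `M`-solid. -/
theorem identity_M_hyperbasis_iff_M_solid {L : FirstOrder.Language.{u, v}} [L.IsAlgebraic]
    (M : Set (Hypersub L)) (hM : IsHypersubMonoid M) (Γ : Set (Identity L)) :
    (∀ e ∈ Γ, ∀ (A : Type w) (S : L.Structure A),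
        (∀ e' ∈ Γ, e'.Satisfied S) → e.MHyperSatisfied M S) ↔
    (∀ (A : Type w) (S : L.Structure A), (∀ e' ∈ Γ, e'.Satisfied S) →
        ∀ σ ∈ M, ∀ e' ∈ Γ, e'.Satisfied (Hypersub.derive σ S)) :=
  identity_M_hyperbasis_iff_M_solid_general M Γ
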